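/- (Symplectic realization, d = 0) Let φ : ℝ⁴ → ℝ³ be given by φ(q1,q2,p1,p2) = (p1/a + (b/a)p2·e^{(a/2)q1} − (c/a)e^{−(a/2)q1}, p2·e^{(a/2)q1}, e^{−(a/2)q1}). If a differentiable curve (q1(t), q2(t), p1(t), p2(t)) satisfies Hamilton's equations q̇1 = (2/a)p1, q̇2 = −(2b²/a)p2·e^{a q1} + 2bc/a, ṗ1 = −c²e^{−a q1} + b²p2²e^{a q1}, ṗ2 = 0, then the curve (x(t), y(t), z(t)) = φ(q1(t), q2(t), p1(t), p2(t)) satisfies the Lotka–Volterra type system ẋ = x(by+cz), ẏ = y(ax−by+cz), ż = z(−ax+by−cz). -/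

import Mathlib

/-!
Along a solution, `y = p₂ e^{(a/2)q₁}` and `z = e^{-(a/2)q₁}` satisfy `ẏ = p₁ y` and `ż = -p₁ z`
because `q̇₁ = (2/a) p₁` and `p₂` is constant, while `ṗ₁ = b²y² - c²z²`. The definition of `x` inverts to
`p₁ = a x - b y + c z`, and substituting this into `ẋ = (ṗ₁ + b ẏ - c ż)/a` factors as `x (b y + c z)`.
-/

open Real

section

variable {a p t : ℝ} {q : ℝ → ℝ}

lemma hasDerivAt_exp_half_mul (ha : a ≠ 0) (hq : HasDerivAt q (2 / a * p) t) :
    HasDerivAt (fun s => exp (a / 2 * q s)) (p * exp (a / 2 * q t)) t := by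
  convert (hq.const_mul (a / 2)).exp using 1
  field_simp

lemma hasDerivAt_exp_neg_half_mul (ha : a ≠ 0) (hq : HasDerivAt q (2 / a * p) t) :
    HasDerivAt (fun s => exp (-(a / 2) * q s)) (-p * exp (-(a / 2) * q t)) t := by
  convert (hq.const_mul (-(a / 2))).exp using 1
  field_simp

end

lemma exp_mul_eq_exp_half_mul_sq (a u : ℝ) : exp (a * u) = exp (a / 2 * u) ^ 2 := by
  rw [← exp_nat_mul]
  ring_nf

theorem hamilton_to_lotka_volterra (a b c : ℝ) (ha : a ≠ 0)
    (q₁ p₁ p₂ : ℝ → ℝ)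
    (hq₁ : ∀ t, HasDerivAt q₁ (2 / a * p₁ t) t)
    (hp₁ : ∀ t, HasDerivAt p₁ (-(c ^ 2) * Real.exp (-(a * q₁ t))
                                + b ^ 2 * (p₂ t) ^ 2 * Real.exp (a * q₁ t)) t)
    (hp₂ : ∀ t, HasDerivAt p₂ 0 t)
    (x y z : ℝ → ℝ)
    (hx : ∀ t, x t = 1 / a * p₁ t + b / a * p₂ t * Real.exp (a / 2 * q₁ t)
                      - c / a * Real.exp (-(a / 2) * q₁ t))
    (hy : ∀ t, y t = p₂ t * Real.exp (a / 2 * q₁ t))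
    (hz : ∀ t, z t = Real.exp (-(a / 2) * q₁ t)) :
    (∀ t, HasDerivAt x (x t * (b * y t + c * z t)) t)
    ∧ (∀ t, HasDerivAt y (y t * (a * x t - b * y t + c * z t)) t)
    ∧ (∀ t, HasDerivAt z (z t * (-(a * x t) + b * y t - c * z t)) t) := by
  have hx_yz : x = fun t => 1 / a * p₁ t + b / a * y t - c / a * z t := by
    funext t; rw [hx, hy, hz]; ring
  have hp₁_eq : ∀ t, p₁ t = a * x t - b * y t + c * z t := by
    intro t; rw [hx_yz]; field_simp; ring
  have hz' : ∀ t, HasDerivAt z (-p₁ t * z t) t := by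
    intro t
    rw [funext hz]
    exact hasDerivAt_exp_neg_half_mul ha (hq₁ t)
  have hy' : ∀ t, HasDerivAt y (p₁ t * y t) t := by
    intro t
    rw [funext hy]
    exact ((hp₂ t).mul (hasDerivAt_exp_half_mul ha (hq₁ t))).congr_deriv (by ring)
  have hp₁' : ∀ t, HasDerivAt p₁ (b ^ 2 * y t ^ 2 - c ^ 2 * z t ^ 2) t := by
    refine fun t => (hp₁ t).congr_deriv ?_
    rw [hy, hz, ← neg_mul, exp_mul_eq_exp_half_mul_sq a, exp_mul_eq_exp_half_mul_sq (-a)]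
    ring_nf
  refine ⟨fun t => ?_, fun t => ?_, fun t => ?_⟩
  · refine ((((hp₁' t).const_mul (1 / a)).add ((hy' t).const_mul (b / a))).sub
      ((hz' t).const_mul (c / a))).congr_deriv ?_ |>.congr_of_eventuallyEq
      (.of_forall fun s => congrFun hx_yz s)
    rw [hp₁_eq]; field_simp; ring
  · exact (hy' t).congr_deriv (by rw [hp₁_eq]; ring)
  · exact (hz' t).congr_deriv (by rw [hp₁_eq]; ring)
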